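/- arXiv:1804.08248 — 2 statements merged into one kernel-verified Lean document; each statement's English description precedes it below -/
import Mathlib

section
/- For all f : [0,1] → ℝ continuous with f(0), f(1) ∈ ℤ and all n ≥ 1, the Kantorovich integer Bernstein polynomial satisfies |B̃_n(f)(x) − B_n f(x)| ≤ 1/n for every x ∈ [0,1], where B̃_n(f)(x) = ∑_{k=0}^n ⌊f(k/n) C(n,k)⌋ x^k (1−x)^{n−k} and B_n f(x) = ∑_{k=0}^n f(k/n) C(n,k) x^k (1−x)^{n−k}. -/
/-!
The Bernstein weights `C(n,k) xᵏ (1-x)ⁿ⁻ᵏ` are nonnegative on `[0,1]` and sum to `1`, so it suffices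
to bound each coefficient error `|⌊f(k/n) C(n,k)⌋ - f(k/n) C(n,k)|` by `C(n,k)/n`. At `k = 0` and
`k = n` the coefficient is an integer and the error vanishes; for `0 < k < n` the error is below `1`
while `C(n,k) ≥ n`.
-/

open Finset

theorem Nat.le_choose_of_pos_of_lt {n k : ℕ} (hk : 0 < k) (hkn : k < n) : n ≤ n.choose k := by
  induction n generalizing k with
  | zero => omega
  | succ m ih =>
    by_cases hk1 : k = 1
    · simp [hk1]
    obtain ⟨j, rfl⟩ : ∃ j, k = j + 1 := ⟨k - 1, by omega⟩
    have hm : m ≤ m.choose j := ih (by omega) (by omega)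
    have hpos : 0 < m.choose (j + 1) := Nat.choose_pos (by omega)
    rw [Nat.choose_succ_succ']
    omega

theorem sum_range_choose_mul_pow_mul_one_sub_pow {R : Type*} [CommRing R] (x : R) (n : ℕ) :
    ∑ k ∈ range (n + 1), (n.choose k : R) * x ^ k * (1 - x) ^ (n - k) = 1 := by
  have h := add_pow x (1 - x) n
  rw [add_sub_cancel, one_pow] at h
  exact (sum_congr rfl fun k _ => by ring).trans h.symm

theorem abs_sum_bernstein_sub_le {x ε : ℝ} (hx0 : 0 ≤ x) (hx1 : x ≤ 1) {n : ℕ} {c d : ℕ → ℝ}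
    (h : ∀ k ≤ n, |c k - d k| ≤ ε * n.choose k) :
    |∑ k ∈ range (n + 1), c k * x ^ k * (1 - x) ^ (n - k)
      - ∑ k ∈ range (n + 1), d k * x ^ k * (1 - x) ^ (n - k)| ≤ ε := by
  have hw : ∀ k, 0 ≤ x ^ k * (1 - x) ^ (n - k) := fun k =>
    mul_nonneg (pow_nonneg hx0 k) (pow_nonneg (sub_nonneg.mpr hx1) _)
  rw [← sum_sub_distrib]
  calc |∑ k ∈ range (n + 1), (c k * x ^ k * (1 - x) ^ (n - k) - d k * x ^ k * (1 - x) ^ (n - k))|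
      ≤ ∑ k ∈ range (n + 1), |c k - d k| * (x ^ k * (1 - x) ^ (n - k)) := by
        refine (abs_sum_le_sum_abs _ _).trans_eq (sum_congr rfl fun k _ => ?_)
        rw [show c k * x ^ k * (1 - x) ^ (n - k) - d k * x ^ k * (1 - x) ^ (n - k)
            = (c k - d k) * (x ^ k * (1 - x) ^ (n - k)) by ring, abs_mul, abs_of_nonneg (hw k)]
    _ ≤ ∑ k ∈ range (n + 1), ε * n.choose k * (x ^ k * (1 - x) ^ (n - k)) :=
        sum_le_sum fun k hk =>
          mul_le_mul_of_nonneg_right (h k (Nat.lt_succ_iff.mp (mem_range.mp hk))) (hw k)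
    _ = ε := by
        simp_rw [mul_assoc, ← mul_sum, ← mul_assoc, sum_range_choose_mul_pow_mul_one_sub_pow,
          mul_one]

theorem abs_floor_mul_choose_sub_le (f : ℝ → ℝ) (h0 : ∃ m : ℤ, f 0 = m) (h1 : ∃ m : ℤ, f 1 = m)
    {n k : ℕ} (hk : k ≤ n) :
    |(⌊f ((k : ℝ) / n) * (n.choose k : ℝ)⌋ : ℝ) - f ((k : ℝ) / n) * (n.choose k : ℝ)|
      ≤ 1 / n * n.choose k := by
  have hexact : ∀ m : ℤ, |(⌊(m : ℝ) * (n.choose k : ℝ)⌋ : ℝ) - m * n.choose k|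
      ≤ 1 / n * n.choose k := fun m => by
    have : (m : ℝ) * (n.choose k : ℝ) = ((m * n.choose k : ℤ) : ℝ) := by push_cast; rfl
    rw [this, Int.floor_intCast, sub_self, abs_zero]
    positivity
  obtain rfl | hk0 := Nat.eq_zero_or_pos k
  · obtain ⟨m, hm⟩ := h0
    rw [Nat.cast_zero, zero_div, hm]
    exact hexact m
  obtain rfl | hkn := hk.eq_or_lt
  · obtain ⟨m, hm⟩ := h1
    rw [div_self (by positivity), hm]
    exact hexact m
  set a := f ((k : ℝ) / n) * (n.choose k : ℝ)
  have hn : (0 : ℝ) < n := by exact_mod_cast hk0.trans hkn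
  have hchoose : (n : ℝ) ≤ n.choose k := by exact_mod_cast Nat.le_choose_of_pos_of_lt hk0 hkn
  calc |(⌊a⌋ : ℝ) - a| = Int.fract a := by
        rw [abs_sub_comm]; exact abs_of_nonneg (Int.fract_nonneg a)
    _ ≤ 1 := (Int.fract_lt_one a).le
    _ ≤ 1 / n * n.choose k := by rw [one_div, inv_mul_eq_div, one_le_div hn]; exact hchoose

theorem kantorovich_bernstein_close_general (f : ℝ → ℝ)
    (h0 : ∃ m : ℤ, f 0 = m) (h1 : ∃ m : ℤ, f 1 = m)
    (n : ℕ) (x : ℝ) (hx : x ∈ Set.Icc (0:ℝ) 1) :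
    |(∑ k ∈ Finset.range (n + 1),
        (⌊f ((k : ℝ) / n) * (n.choose k : ℝ)⌋ : ℝ) * x ^ k * (1 - x) ^ (n - k))
      - ∑ k ∈ Finset.range (n + 1),
        f ((k : ℝ) / n) * (n.choose k : ℝ) * x ^ k * (1 - x) ^ (n - k)| ≤ 1 / n :=
  abs_sum_bernstein_sub_le hx.1 hx.2 fun _ hk => abs_floor_mul_choose_sub_le f h0 h1 hk

theorem kantorovich_bernstein_close (f : ℝ → ℝ)
    (hf : ContinuousOn f (Set.Icc (0:ℝ) 1))
    (h0 : ∃ m : ℤ, f 0 = m) (h1 : ∃ m : ℤ, f 1 = m)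
    (n : ℕ) (hn : 1 ≤ n) (x : ℝ) (hx : x ∈ Set.Icc (0:ℝ) 1) :
    |(∑ k ∈ Finset.range (n + 1),
        (⌊f ((k : ℝ) / n) * (n.choose k : ℝ)⌋ : ℝ) * x ^ k * (1 - x) ^ (n - k))
      - ∑ k ∈ Finset.range (n + 1),
        f ((k : ℝ) / n) * (n.choose k : ℝ) * x ^ k * (1 - x) ^ (n - k)| ≤ 1 / n :=
  kantorovich_bernstein_close_general f h0 h1 n x hx
end

section
/- For all f : [0,1] → ℝ with f(0), f(1) ∈ ℤ and all n ≥ 1, the nearest-integer Bernstein polynomial satisfies |B̂_n(f)(x) − B_n f(x)| ≤ 1/(2n) for every x ∈ [0,1], where B̂_n(f)(x) = ∑_{k=0}^n ⟨f(k/n) C(n,k)⟩ x^k (1−x)^{n−k}. -/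
open Finset

private lemma aux_le_choose : ∀ n k : ℕ, 1 ≤ k → k < n → n ≤ n.choose k := by
  intro n
  induction n with
  | zero => intro k h1 h2; omega
  | succ n ih =>
    intro k h1 h2
    rcases eq_or_lt_of_le (Nat.lt_succ_iff.mp h2) with rfl | hk
    · rw [Nat.choose_succ_self_right]
    · obtain ⟨m, rfl⟩ : ∃ m, k = m + 1 := ⟨k - 1, by omega⟩
      rw [Nat.choose_succ_succ]
      have h3 : n ≤ n.choose (m + 1) := ih (m + 1) h1 hk
      have h4 : 1 ≤ n.choose m := Nat.choose_pos (by omega)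
      simp only [Nat.succ_eq_add_one] at *
      omega

private lemma aux_nint_int (nint : ℝ → ℤ)
    (hnint : ∀ a : ℝ, |a - (nint a : ℝ)| ≤ 1 / 2)
    (a : ℝ) (h : ∃ m : ℤ, a = m) : (nint a : ℝ) = a := by
  obtain ⟨m, rfl⟩ := h
  have h2 := hnint (m : ℝ)
  have h3 : |((m - nint (m : ℝ) : ℤ) : ℝ)| ≤ 1 / 2 := by push_cast; exact h2
  have h4 : m - nint (m : ℝ) = 0 := by
    by_contra hne
    have h5 : (1 : ℤ) ≤ |m - nint (m : ℝ)| := Int.one_le_abs (by omega)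
    have h6 : (1 : ℝ) ≤ |((m - nint (m : ℝ) : ℤ) : ℝ)| := by exact_mod_cast h5
    linarith
  have : nint (m : ℝ) = m := by omega
  rw [this]

theorem nearest_int_bernstein_close (nint : ℝ → ℤ)
    (hnint : ∀ a : ℝ, |a - (nint a : ℝ)| ≤ 1 / 2)
    (f : ℝ → ℝ) (h0 : ∃ m : ℤ, f 0 = m) (h1 : ∃ m : ℤ, f 1 = m)
    (n : ℕ) (hn : 1 ≤ n) (x : ℝ) (hx : x ∈ Set.Icc (0:ℝ) 1) :
    |(∑ k ∈ Finset.range (n + 1),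
        (nint (f ((k : ℝ) / n) * (n.choose k : ℝ)) : ℝ) * x ^ k * (1 - x) ^ (n - k))
      - ∑ k ∈ Finset.range (n + 1),
        f ((k : ℝ) / n) * (n.choose k : ℝ) * x ^ k * (1 - x) ^ (n - k)| ≤ 1 / (2 * n) := by
  obtain ⟨hx0, hx1⟩ := hx
  have hx2 : (0:ℝ) ≤ 1 - x := by linarith
  have hnR : (0:ℝ) < (n : ℝ) := by exact_mod_cast Nat.pos_of_ne_zero (by omega)
  set g : ℕ → ℝ := fun k => f ((k : ℝ) / n) * (n.choose k : ℝ) with hg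
  have key : ∀ k ∈ Finset.range (n + 1),
      |(nint (g k) : ℝ) * x ^ k * (1 - x) ^ (n - k)
        - g k * x ^ k * (1 - x) ^ (n - k)|
      ≤ (1 / (2 * n)) * ((n.choose k : ℝ) * x ^ k * (1 - x) ^ (n - k)) := by
    intro k hk
    have hk' : k ≤ n := by simpa [Nat.lt_succ_iff] using hk
    have hterm : (nint (g k) : ℝ) * x ^ k * (1 - x) ^ (n - k)
        - g k * x ^ k * (1 - x) ^ (n - k)
        = ((nint (g k) : ℝ) - g k) * (x ^ k * (1 - x) ^ (n - k)) := by ring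
    have hpnn : (0:ℝ) ≤ x ^ k * (1 - x) ^ (n - k) := by positivity
    rw [hterm, abs_mul, abs_of_nonneg hpnn]
    rcases eq_or_ne k 0 with rfl | hk0
    · obtain ⟨m, hm⟩ := h0
      have hgz : g 0 = (m : ℝ) := by simp [hg, hm]
      have hz : (nint (g 0) : ℝ) = g 0 := aux_nint_int nint hnint _ ⟨m, hgz⟩
      rw [hz]
      simp only [sub_self, abs_zero, zero_mul]
      positivity
    rcases eq_or_ne k n with hkn | hkn
    · obtain ⟨m, hm⟩ := h1
      have hgz : g k = (m : ℝ) := by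
        simp [hg, hkn, div_self (ne_of_gt hnR), hm]
      have hz : (nint (g k) : ℝ) = g k := aux_nint_int nint hnint _ ⟨m, hgz⟩
      rw [hz]
      simp only [sub_self, abs_zero, zero_mul]
      positivity
    · have hk1 : 1 ≤ k := by omega
      have hkn' : k < n := by omega
      have hcN : n ≤ n.choose k := aux_le_choose n k hk1 hkn'
      have hc : (n : ℝ) ≤ (n.choose k : ℝ) := by exact_mod_cast hcN
      have habs : |(nint (g k) : ℝ) - g k| ≤ 1 / 2 := by
        rw [abs_sub_comm]; exact hnint (g k)
      calc |(nint (g k) : ℝ) - g k| * (x ^ k * (1 - x) ^ (n - k))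
          ≤ (1 / 2) * (x ^ k * (1 - x) ^ (n - k)) := by
            exact mul_le_mul_of_nonneg_right habs hpnn
        _ = (1 / (2 * n)) * ((n : ℝ) * x ^ k * (1 - x) ^ (n - k)) := by
            field_simp
        _ ≤ (1 / (2 * n)) * ((n.choose k : ℝ) * x ^ k * (1 - x) ^ (n - k)) := by
            have h1 : (n : ℝ) * x ^ k * (1 - x) ^ (n - k)
                ≤ (n.choose k : ℝ) * x ^ k * (1 - x) ^ (n - k) := by
              apply mul_le_mul_of_nonneg_right _ (by positivity)
              exact mul_le_mul_of_nonneg_right hc (by positivity)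
            apply mul_le_mul_of_nonneg_left h1 (by positivity)
  have hsum : ∑ k ∈ Finset.range (n + 1),
      (n.choose k : ℝ) * x ^ k * (1 - x) ^ (n - k) = 1 := by
    calc ∑ k ∈ Finset.range (n + 1), (n.choose k : ℝ) * x ^ k * (1 - x) ^ (n - k)
        = ∑ k ∈ Finset.range (n + 1), x ^ k * (1 - x) ^ (n - k) * (n.choose k : ℝ) := by
          apply Finset.sum_congr rfl; intro k _; ring
      _ = (x + (1 - x)) ^ n := (add_pow x (1 - x) n).symm
      _ = 1 := by ring_nf
  calc |(∑ k ∈ Finset.range (n + 1),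
        (nint (g k) : ℝ) * x ^ k * (1 - x) ^ (n - k))
      - ∑ k ∈ Finset.range (n + 1), g k * x ^ k * (1 - x) ^ (n - k)|
      = |∑ k ∈ Finset.range (n + 1),
          ((nint (g k) : ℝ) * x ^ k * (1 - x) ^ (n - k)
            - g k * x ^ k * (1 - x) ^ (n - k))| := by
        rw [Finset.sum_sub_distrib]
    _ ≤ ∑ k ∈ Finset.range (n + 1),
          |(nint (g k) : ℝ) * x ^ k * (1 - x) ^ (n - k)
            - g k * x ^ k * (1 - x) ^ (n - k)| := Finset.abs_sum_le_sum_abs _ _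
    _ ≤ ∑ k ∈ Finset.range (n + 1),
          (1 / (2 * n)) * ((n.choose k : ℝ) * x ^ k * (1 - x) ^ (n - k)) :=
        Finset.sum_le_sum key
    _ = (1 / (2 * n)) * ∑ k ∈ Finset.range (n + 1),
          (n.choose k : ℝ) * x ^ k * (1 - x) ^ (n - k) := by
        rw [Finset.mul_sum]
    _ = 1 / (2 * n) := by rw [hsum, mul_one]
end
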